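/- If G is a nontrivial connected well-dominated graph having an isolatable vertex, then G □ H is not well-dominated for any nontrivial connected graph H. In particular, if G is a connected well-dominated graph of order at least 3 and G □ H is well-dominated for some nontrivial connected graph H, then the minimum degree of G is at least 2. -/

import Mathlib

open SimpleGraph

variable {V : Type*}

/-- Closed neighborhood of a vertex. -/
def closedNbhd (G : SimpleGraph V) (v : V) : Set V := insert v (G.neighborSet v)

/-- Closed neighborhood of a set of vertices. -/
def closedNbhdSet (G : SimpleGraph V) (A : Set V) : Set V := ⋃ a ∈ A, closedNbhd G a

/-- `D` is a dominating set of `G`. -/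
def IsDomSet (G : SimpleGraph V) (D : Set V) : Prop :=
  ∀ v, ∃ u ∈ D, v ∈ closedNbhd G u

/-- `D` is a minimal dominating set of `G`. -/
def IsMinimalDomSet (G : SimpleGraph V) (D : Set V) : Prop :=
  IsDomSet G D ∧ ∀ D' ⊆ D, IsDomSet G D' → D' = D

/-- The domination number `γ`. -/
noncomputable def domNum (G : SimpleGraph V) : ℕ :=
  sInf {n | ∃ D : Set V, IsDomSet G D ∧ D.ncard = n}

/-- The upper domination number `Γ`. -/
noncomputable def upperDomNum (G : SimpleGraph V) : ℕ :=
  sSup {n | ∃ D : Set V, IsMinimalDomSet G D ∧ D.ncard = n}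

/-- A graph is well-dominated if `γ = Γ`. -/
def WellDominated (G : SimpleGraph V) : Prop := domNum G = upperDomNum G

/-- `A` is an independent set of `G`. -/
def IsIndep (G : SimpleGraph V) (A : Set V) : Prop :=
  ∀ u ∈ A, ∀ v ∈ A, ¬ G.Adj u v

/-- `A` is a maximal independent set of `G`. -/
def IsMaxIndep (G : SimpleGraph V) (A : Set V) : Prop :=
  IsIndep G A ∧ ∀ B, IsIndep G B → A ⊆ B → B = A

/-- The independence number `α`. -/
noncomputable def indepNum (G : SimpleGraph V) : ℕ :=
  sSup {n | ∃ A : Set V, IsIndep G A ∧ A.ncard = n}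

/-- The strong product of two graphs. -/
def strongProd {α β : Type*} (G : SimpleGraph α) (H : SimpleGraph β) :
    SimpleGraph (α × β) where
  Adj x y := x ≠ y ∧ (x.1 = y.1 ∨ G.Adj x.1 y.1) ∧ (x.2 = y.2 ∨ H.Adj x.2 y.2)
  symm := by
    refine ⟨?_⟩
    rintro x y ⟨h1, h2, h3⟩
    refine ⟨h1.symm, ?_, ?_⟩
    · cases h2 with
      | inl h => exact Or.inl h.symm
      | inr h => exact Or.inr h.symm
    · cases h3 with
      | inl h => exact Or.inl h.symm
      | inr h => exact Or.inr h.symm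
  loopless := ⟨by rintro x ⟨h1, _⟩; exact h1 rfl⟩

/-- The direct (tensor) product of two graphs. -/
def tensorProd {α β : Type*} (G : SimpleGraph α) (H : SimpleGraph β) :
    SimpleGraph (α × β) where
  Adj x y := G.Adj x.1 y.1 ∧ H.Adj x.2 y.2
  symm := ⟨fun _ _ h => ⟨h.1.symm, h.2.symm⟩⟩
  loopless := ⟨fun _ h => G.irrefl h.1⟩

/-- The corona `G ⊙ K₁`. -/
def corona {α : Type*} (G : SimpleGraph α) : SimpleGraph (α ⊕ α) :=
  SimpleGraph.fromRel (fun x y =>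
    match x, y with
    | Sum.inl u, Sum.inl v => G.Adj u v
    | Sum.inl u, Sum.inr v => u = v
    | _, _ => False)

/-- The private neighborhood `pn[u,D] = N[u] - N[D - {u}]`. -/
def privateNbhd (G : SimpleGraph V) (D : Set V) (u : V) : Set V :=
  {x | x ∈ closedNbhd G u ∧ ∀ d ∈ D, d ≠ u → x ∉ closedNbhd G d}

/-- A set `D` is open irredundant if every vertex of `D` has an external
private neighbor. -/
def IsOpenIrred (G : SimpleGraph V) (D : Set V) : Prop :=
  ∀ u ∈ D, ∃ x ∈ G.neighborSet u, ∀ d ∈ D, d ≠ u → x ∉ closedNbhd G d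

/-- A vertex `x` is isolatable if some independent set `I` isolates it in `G - N[I]`. -/
def Isolatable {V : Type*} (G : SimpleGraph V) (x : V) : Prop :=
  ∃ I : Set V, IsIndep G I ∧ x ∉ closedNbhdSet G I ∧
    ∀ y, G.Adj x y → y ∈ closedNbhdSet G I

/-!
Extend `{x} ∪ I` to a maximal independent set `A` of `G`; it is a minimal dominating set, so
`|A| = γ(G)` as `G` is well-dominated. Since `I ⊆ A - x` dominates `N(x)`, the set
`(A - x) × V(H) ∪ {x} × D_H`, with `D_H` a γ-set of `H`, dominates `G □ H`, whence
`γ(G □ H) ≤ (γ(G) - 1)|V(H)| + γ(H) < γ(G)|V(H)|`. On the other hand, by Bollobás–Cockayne `G` has an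
open irredundant γ-set `D`, and every vertex of `D × V(H)` then has a private neighbour in its own
`H`-layer, so `D × V(H)` is a minimal dominating set of `G □ H` of size `γ(G)|V(H)|`.

A leaf `v` whose neighbour `y` has another neighbour `z` is isolated by `I = {z}`, which gives the
second part.
-/

section Domination

variable {G : SimpleGraph V} {D D' : Set V} {u v : V}

lemma mem_closedNbhd : u ∈ closedNbhd G v ↔ u = v ∨ G.Adj v u := Iff.rfl

lemma self_mem_closedNbhd (G : SimpleGraph V) (v : V) : v ∈ closedNbhd G v :=
  Set.mem_insert _ _

lemma mem_closedNbhd_of_adj (h : G.Adj v u) : u ∈ closedNbhd G v :=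
  Set.mem_insert_of_mem _ h

lemma mem_closedNbhdSet : u ∈ closedNbhdSet G D ↔ ∃ d ∈ D, u ∈ closedNbhd G d := by
  simp [closedNbhdSet]

lemma isDomSet_univ (G : SimpleGraph V) : IsDomSet G Set.univ :=
  fun v => ⟨v, trivial, self_mem_closedNbhd G v⟩

lemma IsDomSet.domNum_le (h : IsDomSet G D) : domNum G ≤ D.ncard :=
  Nat.sInf_le ⟨D, h, rfl⟩

lemma exists_isDomSet_ncard_eq_domNum (G : SimpleGraph V) :
    ∃ D, IsDomSet G D ∧ D.ncard = domNum G :=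
  Nat.sInf_mem (s := {n | ∃ D, IsDomSet G D ∧ D.ncard = n}) ⟨_, Set.univ, isDomSet_univ G, rfl⟩

lemma IsMinimalDomSet.ncard_le_upperDomNum [Finite V] (h : IsMinimalDomSet G D) :
    D.ncard ≤ upperDomNum G :=
  le_csSup ⟨Nat.card V, by rintro _ ⟨D', -, rfl⟩; exact Set.ncard_le_card D'⟩ ⟨D, h, rfl⟩

lemma WellDominated.ncard_eq_domNum [Finite V] (hG : WellDominated G)
    (hD : IsMinimalDomSet G D) : D.ncard = domNum G :=
  le_antisymm (hG ▸ hD.ncard_le_upperDomNum) hD.1.domNum_le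

lemma IsDomSet.of_dominates_closedNbhd (hD : IsDomSet G D) (hsub : D \ {v} ⊆ D')
    (hv : ∀ w ∈ closedNbhd G v, ∃ d ∈ D', w ∈ closedNbhd G d) : IsDomSet G D' := by
  intro w
  obtain ⟨d, hd, hwd⟩ := hD w
  by_cases hdv : d = v
  · exact hv w (hdv ▸ hwd)
  · exact ⟨d, hsub ⟨hd, hdv⟩, hwd⟩

lemma domNum_lt_card [Finite V] (hG : ∀ v, ∃ u, G.Adj v u) (v : V) : domNum G < Nat.card V := by
  obtain ⟨u, hvu⟩ := hG v
  have hdom : IsDomSet G (Set.univ \ {v}) := by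
    refine (isDomSet_univ G).of_dominates_closedNbhd subset_rfl fun w hw => ?_
    by_cases hwv : w = v
    · exact ⟨u, ⟨trivial, (G.ne_of_adj hvu).symm⟩, hwv ▸ mem_closedNbhd_of_adj hvu.symm⟩
    · exact ⟨w, ⟨trivial, hwv⟩, self_mem_closedNbhd G w⟩
  calc domNum G ≤ (Set.univ \ {v}).ncard := hdom.domNum_le
    _ < Nat.card V := Set.ncard_lt_card fun h => (h.symm ▸ trivial : v ∈ Set.univ \ {v}).2 rfl

lemma SimpleGraph.Connected.exists_adj [Finite V] (hG : G.Connected) (hcard : 1 < Nat.card V)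
    (v : V) : ∃ u, G.Adj v u :=
  haveI := Finite.one_lt_card_iff_nontrivial.1 hcard
  not_forall_not.1 (hG.preconnected.not_isIsolated v)

end Domination

section Independence

variable {G : SimpleGraph V} {A M : Set V} {v : V}

lemma IsIndep.insert (hA : IsIndep G A) (hv : ∀ a ∈ A, ¬ G.Adj v a) : IsIndep G (insert v A) := by
  rintro a (rfl | ha) b (rfl | hb) hab
  · exact G.irrefl hab
  · exact hv b hb hab
  · exact hv a ha hab.symm
  · exact hA a ha b hb hab

lemma IsIndep.exists_isMaxIndep_superset [Finite V] (hA : IsIndep G A) :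
    ∃ M, IsMaxIndep G M ∧ A ⊆ M := by
  obtain ⟨M, hAM, hM⟩ := Finite.exists_le_maximal (p := IsIndep G) hA
  exact ⟨M, ⟨hM.prop, fun B hB hMB => (hM.le_of_ge hB hMB).antisymm hMB⟩, hAM⟩

lemma IsMaxIndep.isMinimalDomSet (hM : IsMaxIndep G M) : IsMinimalDomSet G M := by
  obtain ⟨hind, hmax⟩ := hM
  refine ⟨fun v => ?_, fun D' hsub hD' => ?_⟩
  · by_contra! hv
    have hvM : v ∉ M := fun h => hv v h (self_mem_closedNbhd G v)
    have hins := hind.insert fun m hm hvm => hv m hm (mem_closedNbhd_of_adj hvm.symm)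
    exact hvM (hmax _ hins (Set.subset_insert v M) ▸ Set.mem_insert v M)
  · refine hsub.antisymm fun m hm => ?_
    obtain ⟨d, hd, hmd⟩ := hD' m
    rcases mem_closedNbhd.1 hmd with rfl | hdm
    · exact hd
    · exact absurd hdm (hind d (hsub hd) m hm)

end Independence

section OpenIrredundance

variable {G : SimpleGraph V} {D : Set V} {u v : V}

def adjPairsIn (G : SimpleGraph V) (D : Set V) : Set (V × V) :=
  {p | p.1 ∈ D ∧ p.2 ∈ D ∧ G.Adj p.1 p.2}

/-- Without an external private neighbour, `v` is isolated in `G[D]` (else `D - v` would dominate),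
so exchanging `v` for a neighbour `u` gains the edge from `u` to its dominator. -/
lemma exists_isDomSet_adjPairsIn_ssubset [Finite V] (hD : IsDomSet G D)
    (hcard : D.ncard = domNum G) (hv : v ∈ D) (hu : G.Adj v u)
    (hpriv : ∀ w, G.Adj v w → ∃ d ∈ D, d ≠ v ∧ w ∈ closedNbhd G d) :
    ∃ D', IsDomSet G D' ∧ D'.ncard = domNum G ∧ adjPairsIn G D ⊂ adjPairsIn G D' := by
  have hmin : ¬ IsDomSet G (D \ {v}) := fun h => by
    have hpos := (Set.ncard_pos (Set.toFinite D)).2 ⟨v, hv⟩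
    have hle := h.domNum_le
    rw [Set.ncard_sdiff_singleton_of_mem hv] at hle
    omega
  have hiso : ∀ d ∈ D, ¬ G.Adj v d := fun d hd hvd => hmin <| by
    refine hD.of_dominates_closedNbhd subset_rfl fun w hw => ?_
    rcases mem_closedNbhd.1 hw with rfl | hvw
    · exact ⟨d, ⟨hd, (G.ne_of_adj hvd).symm⟩, mem_closedNbhd_of_adj hvd.symm⟩
    · obtain ⟨d', hd', hd'v, hwd'⟩ := hpriv w hvw
      exact ⟨d', ⟨hd', hd'v⟩, hwd'⟩
  obtain ⟨d, hd, hdv, hud⟩ := hpriv u hu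
  have huD : u ∉ D := fun h => hiso u h hu
  have hdu : G.Adj d u := (mem_closedNbhd.1 hud).resolve_left fun h => huD (h ▸ hd)
  refine ⟨insert u (D \ {v}), ?_, by rw [Set.ncard_exchange huD hv, hcard], ?_⟩
  · refine hD.of_dominates_closedNbhd (Set.subset_insert _ _) fun w hw => ?_
    rcases mem_closedNbhd.1 hw with rfl | hvw
    · exact ⟨u, Set.mem_insert _ _, mem_closedNbhd_of_adj hu.symm⟩
    · obtain ⟨d', hd', hd'v, hwd'⟩ := hpriv w hvw
      exact ⟨d', Set.mem_insert_of_mem _ ⟨hd', hd'v⟩, hwd'⟩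
  · refine (Set.ssubset_iff_of_subset ?_).2
      ⟨(u, d), ⟨Set.mem_insert _ _, Set.mem_insert_of_mem _ ⟨hd, hdv⟩, hdu.symm⟩, fun h => huD h.1⟩
    rintro ⟨p, q⟩ ⟨hp, hq, hpq⟩
    have hpv : p ≠ v := by rintro rfl; exact hiso q hq hpq
    have hqv : q ≠ v := by rintro rfl; exact hiso p hp hpq.symm
    exact ⟨Set.mem_insert_of_mem _ ⟨hp, hpv⟩, Set.mem_insert_of_mem _ ⟨hq, hqv⟩, hpq⟩

/-- Bollobás–Cockayne: a minimum dominating set spanning the most edges is open irredundant. -/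
theorem exists_isDomSet_ncard_eq_domNum_isOpenIrred [Finite V] (hG : ∀ v, ∃ u, G.Adj v u) :
    ∃ D, IsDomSet G D ∧ D.ncard = domNum G ∧ IsOpenIrred G D := by
  obtain ⟨D, ⟨hD, hcard⟩, hmax⟩ := Set.Finite.exists_maximalFor (fun D => (adjPairsIn G D).ncard)
    {D | IsDomSet G D ∧ D.ncard = domNum G} (Set.toFinite _) (exists_isDomSet_ncard_eq_domNum G)
  refine ⟨D, hD, hcard, fun v hv => ?_⟩
  by_contra! hpriv
  obtain ⟨u, hu⟩ := hG v
  obtain ⟨D', hD', hD'card, hlt⟩ := exists_isDomSet_adjPairsIn_ssubset hD hcard hv hu hpriv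
  exact (Set.ncard_lt_ncard hlt).not_ge (hmax ⟨hD', hD'card⟩ (Set.ncard_lt_ncard hlt).le)

end OpenIrredundance

section BoxProduct

variable {α β : Type*} {G : SimpleGraph α} {H : SimpleGraph β}

lemma mem_closedNbhd_boxProd {a c : α} {b d : β} :
    (a, b) ∈ closedNbhd (G □ H) (c, d) ↔
      a ∈ closedNbhd G c ∧ b = d ∨ a = c ∧ b ∈ closedNbhd H d := by
  simp only [mem_closedNbhd, boxProd_adj, Prod.mk.injEq]
  grind [SimpleGraph.ne_of_adj]

lemma IsOpenIrred.isMinimalDomSet_prod_univ {D : Set α} (hD : IsDomSet G D)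
    (hirr : IsOpenIrred G D) : IsMinimalDomSet (G □ H) (D ×ˢ Set.univ) := by
  refine ⟨fun ⟨g, b⟩ => ?_, fun D' hsub hD' => hsub.antisymm ?_⟩
  · obtain ⟨d, hd, hgd⟩ := hD g
    exact ⟨(d, b), ⟨hd, trivial⟩, mem_closedNbhd_boxProd.2 (Or.inl ⟨hgd, rfl⟩)⟩
  · rintro ⟨d, b⟩ ⟨hd, -⟩
    obtain ⟨x, hdx, hpriv⟩ := hirr d hd
    have hxD : x ∉ D := fun hx => hpriv x hx (G.ne_of_adj hdx).symm (self_mem_closedNbhd G x)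
    obtain ⟨⟨p, q⟩, hpq, hx⟩ := hD' (x, b)
    have hp : p ∈ D := (hsub hpq).1
    rcases mem_closedNbhd_boxProd.1 hx with ⟨hxp, rfl⟩ | ⟨rfl, -⟩
    · obtain rfl : p = d := by_contra fun hpd => hpriv p hp hpd hxp
      exact hpq
    · exact absurd hp hxD

lemma IsDomSet.boxProd_of_dominates_neighbors {A : Set α} {x : α} {DH : Set β}
    (hA : IsDomSet G A) (hx : ∀ y, G.Adj x y → ∃ a ∈ A \ {x}, y ∈ closedNbhd G a)
    (hDH : IsDomSet H DH) : IsDomSet (G □ H) ((A \ {x}) ×ˢ Set.univ ∪ {x} ×ˢ DH) := by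
  rintro ⟨g, b⟩
  by_cases hgx : g = x
  · obtain ⟨d, hd, hbd⟩ := hDH b
    exact ⟨(x, d), Or.inr ⟨rfl, hd⟩, mem_closedNbhd_boxProd.2 (Or.inr ⟨hgx, hbd⟩)⟩
  · obtain ⟨a, ha, hga⟩ : ∃ a ∈ A \ {x}, g ∈ closedNbhd G a := by
      obtain ⟨a, ha, hga⟩ := hA g
      by_cases hax : a = x
      · subst hax
        exact hx g ((mem_closedNbhd.1 hga).resolve_left hgx)
      · exact ⟨a, ⟨ha, hax⟩, hga⟩
    exact ⟨(a, b), Or.inl ⟨ha, trivial⟩, mem_closedNbhd_boxProd.2 (Or.inl ⟨hga, rfl⟩)⟩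

end BoxProduct

section Isolatable

variable {α : Type*} {G : SimpleGraph α} {x y z : α}

lemma Isolatable.exists_isMaxIndep [Finite α] (hx : Isolatable G x) :
    ∃ A, IsMaxIndep G A ∧ x ∈ A ∧ ∀ y, G.Adj x y → ∃ a ∈ A \ {x}, y ∈ closedNbhd G a := by
  obtain ⟨I, hI, hxI, hNx⟩ := hx
  have hI' : IsIndep G (insert x I) := hI.insert fun i hi hxi =>
    hxI (mem_closedNbhdSet.2 ⟨i, hi, mem_closedNbhd_of_adj hxi.symm⟩)
  obtain ⟨A, hA, hIA⟩ := hI'.exists_isMaxIndep_superset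
  refine ⟨A, hA, hIA (Set.mem_insert x I), fun y hxy => ?_⟩
  obtain ⟨i, hi, hyi⟩ := mem_closedNbhdSet.1 (hNx y hxy)
  have hix : i ≠ x := by
    rintro rfl
    exact hxI (mem_closedNbhdSet.2 ⟨i, hi, self_mem_closedNbhd G i⟩)
  exact ⟨i, ⟨hIA (Set.mem_insert_of_mem x hi), hix⟩, hyi⟩

theorem Isolatable.not_wellDominated_boxProd {β : Type*} [Finite α] [Finite β]
    {H : SimpleGraph β} (hG : ∀ a, ∃ b, G.Adj a b) (hGwd : WellDominated G) (hx : Isolatable G x)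
    (hH : ∀ b, ∃ c, H.Adj b c) (b : β) : ¬ WellDominated (G □ H) := by
  intro hwd
  obtain ⟨A, hA, hxA, hNx⟩ := hx.exists_isMaxIndep
  have hAcard : A.ncard = domNum G := hGwd.ncard_eq_domNum hA.isMinimalDomSet
  have hApos : 0 < A.ncard := (Set.ncard_pos (Set.toFinite A)).2 ⟨x, hxA⟩
  obtain ⟨DH, hDH, hDHcard⟩ := exists_isDomSet_ncard_eq_domNum H
  have hlower : domNum (G □ H) ≤ (A.ncard - 1) * Nat.card β + domNum H := by
    have hdisj : Disjoint ((A \ {x}) ×ˢ (Set.univ : Set β)) ({x} ×ˢ DH) :=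
      Set.disjoint_left.2 fun _ h h' => h.1.2 h'.1
    have hdom := hA.isMinimalDomSet.1.boxProd_of_dominates_neighbors hNx hDH
    rw [← Set.ncard_sdiff_singleton_of_mem hxA, ← Set.ncard_univ, ← hDHcard, ← Set.ncard_prod,
      ← one_mul DH.ncard, ← Set.ncard_singleton x, ← Set.ncard_prod, ← Set.ncard_union_eq hdisj]
    exact hdom.domNum_le
  obtain ⟨D, hD, hDcard, hirr⟩ := exists_isDomSet_ncard_eq_domNum_isOpenIrred hG
  have hupper : domNum G * Nat.card β ≤ domNum (G □ H) := by
    rw [hwd, ← hDcard, ← Set.ncard_univ, ← Set.ncard_prod]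
    exact (hirr.isMinimalDomSet_prod_univ hD).ncard_le_upperDomNum
  have hH := domNum_lt_card hH b
  have hβ : Nat.card β ≤ A.ncard * Nat.card β := Nat.le_mul_of_pos_left _ hApos
  rw [Nat.sub_one_mul] at hlower
  rw [← hAcard] at hupper
  omega

lemma isolatable_of_forall_adj_eq (hx : ∀ w, G.Adj x w → w = y) (hyz : G.Adj y z) (hzx : z ≠ x) :
    Isolatable G x := by
  refine ⟨{z}, fun a ha b hb hab => G.ne_of_adj hab (ha.trans hb.symm), ?_, fun w hxw => ?_⟩
  · intro hxz
    obtain ⟨i, hi, hx'⟩ := mem_closedNbhdSet.1 hxz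
    rw [Set.mem_singleton_iff.1 hi] at hx'
    rcases mem_closedNbhd.1 hx' with rfl | hzx'
    · exact hzx rfl
    · exact G.ne_of_adj hyz (hx z hzx'.symm).symm
  · exact mem_closedNbhdSet.2 ⟨z, rfl, hx w hxw ▸ mem_closedNbhd_of_adj hyz.symm⟩

lemma SimpleGraph.Connected.exists_adj_ne_of_forall_adj_eq [Finite α] (hG : G.Connected)
    (hcard : 2 < Nat.card α) (hx : ∀ w, G.Adj x w → w = y) : ∃ z, G.Adj y z ∧ z ≠ x := by
  obtain ⟨w, hw⟩ : ∃ w, w ∉ ({x, y} : Set α) := by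
    by_contra! h
    have hpair : ({x, y} : Set α).ncard ≤ 2 :=
      (Set.ncard_insert_le x {y}).trans (by rw [Set.ncard_singleton])
    have huniv := Set.ncard_le_ncard (s := Set.univ) fun w _ => h w
    rw [Set.ncard_univ] at huniv
    omega
  obtain ⟨d, -, ha, hz⟩ :=
    (hG.preconnected x w).some.exists_boundary_dart {x, y} (Set.mem_insert x _) hw
  rcases ha with ha | ha
  · exact absurd (Or.inr (hx _ (ha ▸ d.adj))) hz
  · exact ⟨d.snd, ha ▸ d.adj, fun h => hz (Or.inl h)⟩

end Isolatable

/-- If `G` is a nontrivial connected well-dominated graph with an isolatable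
vertex, then `G □ H` is not well-dominated for any nontrivial connected `H`.
In particular, if `G` is connected, well-dominated, of order at least `3`, and
`G □ H` is well-dominated for some nontrivial connected `H`, then `δ(G) ≥ 2`. -/
theorem stmt_16 :
    (∀ {α β : Type} [Fintype α] [Fintype β] (G : SimpleGraph α) (H : SimpleGraph β),
      G.Connected → 2 ≤ Fintype.card α → WellDominated G → (∃ x, Isolatable G x) →
      H.Connected → 2 ≤ Fintype.card β → ¬ WellDominated (G □ H)) ∧
    (∀ {α : Type} [Fintype α] (G : SimpleGraph α),
      G.Connected → 3 ≤ Fintype.card α → WellDominated G →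
      (∃ (β : Type) (_ : Fintype β) (H : SimpleGraph β),
        H.Connected ∧ 2 ≤ Fintype.card β ∧ WellDominated (G □ H)) →
      ∀ v : α, ∃ a b : α, a ≠ b ∧ G.Adj v a ∧ G.Adj v b) := by
  refine ⟨fun G H hG hGcard hGwd ⟨x, hx⟩ hH hHcard => ?_,
    fun G hG hGcard hGwd ⟨β, _, H, hH, hHcard, hwd⟩ v => ?_⟩
  all_goals rw [← Nat.card_eq_fintype_card] at hGcard hHcard
  · exact hx.not_wellDominated_boxProd (hG.exists_adj hGcard) hGwd (hH.exists_adj hHcard)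
      hH.nonempty.some
  · have hGadj := hG.exists_adj (by omega)
    obtain ⟨y, hvy⟩ := hGadj v
    by_contra! hdeg
    have hleaf : ∀ w, G.Adj v w → w = y := fun w hvw => by_contra fun hwy => hdeg w y hwy hvw hvy
    obtain ⟨z, hyz, hzv⟩ := hG.exists_adj_ne_of_forall_adj_eq hGcard hleaf
    exact (isolatable_of_forall_adj_eq hleaf hyz hzv).not_wellDominated_boxProd hGadj hGwd
      (hH.exists_adj hHcard) hH.nonempty.some hwd
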